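/- Let n ≥ 1, k = 2n-1, N = 2n+1, and let ∂_k and ∂_N be the Floer boundary operators on CF(k) and CF(N) (free Z/2 vector spaces on sign vectors, ∂ = sum of single flips plus total flip). Write elements of π^{-1}(ker ∂_k) ⊆ CF(N) in the form x = [(1,1,u)+(-1,-1,u)+(-1,1,v)+(1,-1,v)+(1,1,w)+(-1,1,w)] + (1,1,t) with u,v,w ∈ CF(k) and t ∈ ker ∂_k. Then ∂_N(x) = 0 if and only if ∂_k v = w + t + η w, ∂_k u = w + η t + η w, and ∂_k w = 0, where η is the total sign flip on CF(k). -/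
import Mathlib


open Finset

abbrev SV (k : ℕ) := Fin k → Bool
abbrev CFR (R : Type) [CommRing R] (k : ℕ) := SV k → R
abbrev CF (k : ℕ) := CFR (ZMod 2) k

def sflip {k : ℕ} (i : Fin k) (ε : SV k) : SV k := Function.update ε i (!ε i)
def flipAll {k : ℕ} (ε : SV k) : SV k := fun j => !ε j

def bdryR (R : Type) [CommRing R] (k : ℕ) : CFR R k →ₗ[R] CFR R k where
  toFun x := fun ε => (∑ i : Fin k, x (sflip i ε)) + x (flipAll ε)
  map_add' x y := by funext ε; simp only [Pi.add_apply, Finset.sum_add_distrib]; ring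
  map_smul' c x := by
    funext ε
    show (∑ i, (c • x) (sflip i ε)) + (c • x) (flipAll ε)
        = c * ((∑ i, x (sflip i ε)) + x (flipAll ε))
    simp only [Pi.smul_apply, smul_eq_mul]
    rw [mul_add, Finset.mul_sum]

abbrev bdry (k : ℕ) : CF k →ₗ[ZMod 2] CF k := bdryR (ZMod 2) k

def eta (k : ℕ) : CF k →ₗ[ZMod 2] CF k where
  toFun x := fun ε => x (flipAll ε)
  map_add' x y := by funext ε; simp
  map_smul' c x := by funext ε; simp

def pre (k : ℕ) (a b : Bool) : CF k →ₗ[ZMod 2] CF (k+2) where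
  toFun x := fun ε => if ε 0 = a ∧ ε 1 = b then x (fun i => ε i.succ.succ) else 0
  map_add' x y := by funext ε; by_cases h : ε 0 = a ∧ ε 1 = b <;> simp [h]
  map_smul' c x := by funext ε; by_cases h : ε 0 = a ∧ ε 1 = b <;> simp [h]

def proj (k : ℕ) : CF (k+2) →ₗ[ZMod 2] CF k where
  toFun x := fun δ => ∑ a : Bool, ∑ b : Bool, x (Fin.cons a (Fin.cons b δ))
  map_add' x y := by funext δ; simp [Finset.sum_add_distrib]
  map_smul' c x := by funext δ; simp [Finset.mul_sum]; ring


lemma pre_apply (k : ℕ) (a b : Bool) (y : CF k) (ε : SV (k+2)) :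
    pre k a b y ε = if ε 0 = a ∧ ε 1 = b then y (fun i => ε i.succ.succ) else 0 := rfl

lemma bdry_apply (k : ℕ) (y : CF k) (ε : SV k) :
    bdry k y ε = (∑ i : Fin k, y (sflip i ε)) + y (flipAll ε) := rfl

lemma eta_apply (k : ℕ) (y : CF k) (ε : SV k) : eta k y ε = y (flipAll ε) := rfl

lemma bdry_pre (k : ℕ) (a b : Bool) (y : CF k) :
    bdry (k+2) (pre k a b y)
      = pre k (!a) b y + pre k a (!b) y + pre k a b (bdry k y)
        + pre k a b (eta k y) + pre k (!a) (!b) (eta k y) := by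
  funext ε
  have h01 : (0 : Fin (k+2)) ≠ 1 := by simp [Fin.ext_iff]
  have e00 : sflip (0 : Fin (k+2)) ε 0 = !ε 0 := Function.update_self _ _ _
  have e01 : sflip (0 : Fin (k+2)) ε 1 = ε 1 := Function.update_of_ne h01.symm _ _
  have e10 : sflip (1 : Fin (k+2)) ε 0 = ε 0 := Function.update_of_ne h01 _ _
  have e11 : sflip (1 : Fin (k+2)) ε 1 = !ε 1 := Function.update_self _ _ _
  have etail0 : (fun i : Fin k => sflip (0 : Fin (k+2)) ε i.succ.succ) = fun i => ε i.succ.succ := by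
    funext i; exact Function.update_of_ne (by simp [Fin.ext_iff]) _ _
  have etail1 : (fun i : Fin k => sflip (1 : Fin (k+2)) ε i.succ.succ) = fun i => ε i.succ.succ := by
    funext i; exact Function.update_of_ne (by simp [Fin.ext_iff]) _ _
  have ej0 : ∀ j : Fin k, sflip (j.succ.succ) ε 0 = ε 0 := fun j =>
    Function.update_of_ne (by simp [Fin.ext_iff]) _ _
  have ej1 : ∀ j : Fin k, sflip (j.succ.succ) ε 1 = ε 1 := fun j =>
    Function.update_of_ne (by simp [Fin.ext_iff]) _ _
  have ejtail : ∀ j : Fin k, (fun i : Fin k => sflip (j.succ.succ) ε i.succ.succ)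
      = sflip j (fun i => ε i.succ.succ) := by
    intro j; funext i
    by_cases h : i = j
    · subst h
      simp [sflip, Function.update_self]
    · rw [sflip, Function.update_of_ne (by simpa [Fin.ext_iff] using fun hh => h (Fin.ext hh)),
        sflip, Function.update_of_ne h]
  have ef0 : flipAll ε 0 = !ε 0 := rfl
  have ef1 : flipAll ε 1 = !ε 1 := rfl
  have eftail : (fun i : Fin k => flipAll ε i.succ.succ) = flipAll (fun i => ε i.succ.succ) := rfl
  show (∑ i : Fin (k+2), pre k a b y (sflip i ε)) + pre k a b y (flipAll ε) = _
  rw [Fin.sum_univ_succ, Fin.sum_univ_succ]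
  simp only [pre_apply, Pi.add_apply, Fin.succ_zero_eq_one, e00, e01, e10, e11, ej0, ej1,
    etail0, etail1, eftail, ef0, ef1]
  simp only [ejtail]
  cases a <;> cases b <;> cases hε0 : ε 0 <;> cases hε1 : ε 1 <;>
    simp [hε0, hε1, bdry_apply, eta_apply] <;> ring_nf <;> simp [show (2:ZMod 2) = 0 from rfl]

lemma pre_cons (k : ℕ) (a b a' b' : Bool) (y : CF k) (δ : SV k) :
    pre k a' b' y (Fin.cons a (Fin.cons b δ)) = if a = a' ∧ b = b' then y δ else 0 := by
  have h0 : (Fin.cons a (Fin.cons b δ) : SV (k+2)) 0 = a := rfl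
  have h1 : (Fin.cons a (Fin.cons b δ) : SV (k+2)) 1 = b := by
    rw [show (1 : Fin (k+2)) = (0 : Fin (k+1)).succ from rfl, Fin.cons_succ]; rfl
  have htail : (fun i : Fin k => (Fin.cons a (Fin.cons b δ) : SV (k+2)) i.succ.succ) = δ := by
    funext i; simp [Fin.cons_succ]
  rw [pre_apply, h0, h1, htail]

lemma pre_zero_iff (k : ℕ) (A B C D : CF k) :
    pre k true true A + pre k false false B + pre k false true C + pre k true false D = 0 ↔
      A = 0 ∧ B = 0 ∧ C = 0 ∧ D = 0 := by
  constructor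
  · intro h
    refine ⟨?_, ?_, ?_, ?_⟩ <;> funext δ
    · simpa [pre_cons] using congrFun h (Fin.cons true (Fin.cons true δ))
    · simpa [pre_cons] using congrFun h (Fin.cons false (Fin.cons false δ))
    · simpa [pre_cons] using congrFun h (Fin.cons false (Fin.cons true δ))
    · simpa [pre_cons] using congrFun h (Fin.cons true (Fin.cons false δ))
  · rintro ⟨hA, hB, hC, hD⟩
    rw [hA, hB, hC, hD]
    simp

theorem stmt5 (n k : ℕ) (hn : 1 ≤ n) (hk : k = 2 * n - 1)
    (u v w t : CF k) (ht : bdry k t = 0) (x : CF (k + 2))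
    (hx : x = pre k true true u + pre k false false u
            + pre k false true v + pre k true false v
            + pre k true true w + pre k false true w
            + pre k true true t) :
    bdry (k + 2) x = 0 ↔
      (bdry k v = w + t + eta k w ∧
       bdry k u = w + eta k t + eta k w ∧
       bdry k w = 0) := by
  subst hx
  have hexp : bdry (k+2) (pre k true true u + pre k false false u
            + pre k false true v + pre k true false v
            + pre k true true w + pre k false true w
            + pre k true true t)
      = pre k true true (bdry k u + eta k u + eta k u + v + v + bdry k w + eta k w + w + eta k t)
        + pre k false false (bdry k u + eta k u + eta k u + v + v + eta k w + w + eta k t)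
        + pre k false true (u + u + bdry k v + eta k v + eta k v + w + bdry k w + eta k w + t)
        + pre k true false (u + u + bdry k v + eta k v + eta k v + w + eta k w + t) := by
    simp only [map_add, bdry_pre, ht, map_zero, add_zero, Bool.not_true, Bool.not_false]
    abel
  rw [hexp, pre_zero_iff]
  constructor
  · rintro ⟨hA, hB, hC, hD⟩
    refine ⟨?_, ?_, ?_⟩ <;> funext δ <;> simp only [Pi.add_apply, Pi.zero_apply]
    · have hd := congrFun hD δ
      simp only [Pi.add_apply, Pi.zero_apply] at hd
      linear_combination (norm := (ring_nf; simp [show (2:ZMod 2) = 0 from rfl, show (4:ZMod 2) = 0 from rfl])) hd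
    · have hb := congrFun hB δ
      simp only [Pi.add_apply, Pi.zero_apply] at hb
      linear_combination (norm := (ring_nf; simp [show (2:ZMod 2) = 0 from rfl, show (4:ZMod 2) = 0 from rfl])) hb
    · have ha := congrFun hA δ
      have hb := congrFun hB δ
      simp only [Pi.add_apply, Pi.zero_apply] at ha hb
      linear_combination (norm := (ring_nf; simp [show (2:ZMod 2) = 0 from rfl, show (4:ZMod 2) = 0 from rfl])) ha + hb
  · rintro ⟨h1, h2, h3⟩
    refine ⟨?_, ?_, ?_, ?_⟩ <;> funext δ <;> simp only [Pi.add_apply, Pi.zero_apply]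
    · have a2 := congrFun h2 δ
      have a3 := congrFun h3 δ
      simp only [Pi.add_apply, Pi.zero_apply] at a2 a3
      linear_combination (norm := (ring_nf; simp [show (2:ZMod 2) = 0 from rfl, show (4:ZMod 2) = 0 from rfl])) a2 + a3
    · have a2 := congrFun h2 δ
      simp only [Pi.add_apply, Pi.zero_apply] at a2
      linear_combination (norm := (ring_nf; simp [show (2:ZMod 2) = 0 from rfl, show (4:ZMod 2) = 0 from rfl])) a2
    · have a1 := congrFun h1 δ
      have a3 := congrFun h3 δ
      simp only [Pi.add_apply, Pi.zero_apply] at a1 a3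
      linear_combination (norm := (ring_nf; simp [show (2:ZMod 2) = 0 from rfl, show (4:ZMod 2) = 0 from rfl])) a1 + a3
    · have a1 := congrFun h1 δ
      simp only [Pi.add_apply, Pi.zero_apply] at a1
      linear_combination (norm := (ring_nf; simp [show (2:ZMod 2) = 0 from rfl, show (4:ZMod 2) = 0 from rfl])) a1
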